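/- For nonnegative integers $k_1,\dots,k_7$ with $s_1 = k_1 + \dots + k_7 \geq 5$, we have $-42 + 3s_1(2s_1 - 7) + s_2(2s_1 - 9) + 2s_3 \geq 0$, where $s_j$ is the $j$th elementary symmetric polynomial in $k_1,\dots,k_7$. -/

import Mathlib

/-- The `j`th elementary symmetric polynomial of `k : Fin 7 → ℕ`, as an integer. -/
def S (k : Fin 7 → ℕ) (j : ℕ) : ℤ :=
  ∑ P ∈ Finset.powersetCard j (Finset.univ : Finset (Fin 7)), ∏ i ∈ P, (k i : ℤ)

lemma S_nonneg (k : Fin 7 → ℕ) (j : ℕ) : 0 ≤ S k j := by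
  unfold S; positivity

theorem genus3_s1_ge_five (k : Fin 7 → ℕ) (h : 5 ≤ S k 1) :
    0 ≤ -42 + 3 * S k 1 * (2 * S k 1 - 7) + S k 2 * (2 * S k 1 - 9) + 2 * S k 3 := by
  have h_s1 : 45 ≤ 3 * S k 1 * (2 * S k 1 - 7) := by nlinarith
  have h_s2 : 0 ≤ S k 2 * (2 * S k 1 - 9) := mul_nonneg (S_nonneg k 2) (by linarith)
  linarith [S_nonneg k 3]
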